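/- Rank trade-off inequality (equations (12)–(13) in the proof of Theorem 1). Let C be an (n,k,l) MDS linear array code over a finite field F and let P be an hl × nl matrix over F whose rows lie in C^⊥, where 1 ≤ h ≤ min{u, s̄u − v}, such that rank [P_{j'_1},…,P_{j'_h}] = hl for distinct failed nodes j'_b = e'u + g'_b in a host rack e', and P̄_e = 0 for every e ∉ R ∪ {e'}, where R ⊆ {0,…,n̄−1}∖{e'} is a set of helper racks with |R| = d̄. Then for every subset S ⊆ R with |S| = s̄ − 1, every ẽ ∈ R∖S, and every subset U ⊆ {0,…,u−1} with |U| = u − v, it holds that h·l ≤ ∑_{e∈S} rank P̄_e + ∑_{g∈U} rank P_{ẽu+g}. -/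

import Mathlib

/-!
Let `x` be a row vector with `x P̄_e = 0` for `e ∈ S` and `x P_{ẽu+g} = 0` for `g ∈ U`. The
combination `x P` of rows of `P` lies in `C^⊥` and can be nonzero only on the racks of
`(R ∖ S ∖ {ẽ}) ∪ {e'}` and on the `v` nodes `ẽu + g` with `g ∉ U`: exactly `k̄u + v = k` nodes.
In an MDS code every `k` nodes form an information set, so a dual vector supported on `k` nodes
vanishes. Hence `x` kills the failed block, which has full row rank `hl`, and `x = 0`. So
`x ↦ ((x P̄_e)_{e ∈ S}, (x P_{ẽu+g})_{g ∈ U})` is injective on `F^{hl}`, and `hl` is at most the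
sum of the ranks of the blocks.
-/

open Module Matrix Finset

namespace Matrix

variable {F m : Type*} [Field F] [Fintype m]

theorem finrank_range_vecMulLinear {n : Type*} [Fintype n] (M : Matrix m n F) :
    finrank F (LinearMap.range M.vecMulLinear) = M.rank := by
  rw [range_vecMulLinear, rank_eq_finrank_span_row]

theorem vecMul_injective_of_rank_eq_card {n : Type*} [Fintype n] {M : Matrix m n F}
    (hM : M.rank = Fintype.card m) : Function.Injective M.vecMul :=
  vecMul_injective_iff.2 <| linearIndependent_iff_card_eq_finrank_span.2 <| by
    rw [← hM, rank_eq_finrank_span_row]; rfl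

theorem card_le_sum_rank_add_sum_rank {ι κ n₁ n₂ : Type*} [Fintype ι] [Fintype κ]
    [Fintype n₁] [Fintype n₂] (A : ι → Matrix m n₁ F) (B : κ → Matrix m n₂ F)
    (hAB : ∀ x : m → F, (∀ i, x ᵥ* A i = 0) → (∀ j, x ᵥ* B j = 0) → x = 0) :
    Fintype.card m ≤ ∑ i, (A i).rank + ∑ j, (B j).rank := by
  let Φ : (m → F) →ₗ[F] (∀ i, LinearMap.range (A i).vecMulLinear) ×
      (∀ j, LinearMap.range (B j).vecMulLinear) :=
    (LinearMap.pi fun i => (A i).vecMulLinear.rangeRestrict).prod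
      (LinearMap.pi fun j => (B j).vecMulLinear.rangeRestrict)
  have hΦ : Function.Injective Φ := by
    refine (injective_iff_map_eq_zero Φ).2 fun x hx => hAB x (fun i => ?_) (fun j => ?_)
    · simpa [Φ, Subtype.ext_iff] using congrFun (congrArg Prod.fst hx) i
    · simpa [Φ, Subtype.ext_iff] using congrFun (congrArg Prod.snd hx) j
  calc Fintype.card m = finrank F (m → F) := (finrank_fintype_fun_eq_card F).symm
    _ ≤ _ := LinearMap.finrank_le_finrank_of_injective hΦ
    _ = _ := by simp only [finrank_prod, finrank_pi_fintype, finrank_range_vecMulLinear]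

theorem sum_dotProduct_vecMul_eq_zero {r J I : Type*} [Fintype r] [Fintype J] [Fintype I]
    (P : Matrix r (J × I) F) {c : J → I → F} (hc : ∀ ρ, ∑ j, ∑ i, P ρ (j, i) * c j i = 0)
    (x : r → F) : ∑ j, (fun i => (x ᵥ* P) (j, i)) ⬝ᵥ c j = 0 := by
  have hPc : P *ᵥ Function.uncurry c = 0 :=
    funext fun ρ => (Fintype.sum_prod_type _).trans (hc ρ)
  calc ∑ j, (fun i => (x ᵥ* P) (j, i)) ⬝ᵥ c j = (x ᵥ* P) ⬝ᵥ Function.uncurry c := by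
        simp only [dotProduct, Fintype.sum_prod_type, Function.uncurry_apply_pair]
    _ = 0 := by rw [← dotProduct_mulVec, hPc, dotProduct_zero]

end Matrix

section MDS

variable {F J I : Type*} [Field F] [Fintype J] [Fintype I] {C : Submodule F (J → I → F)} {K : ℕ}

theorem exists_mem_eqOn_of_mds (hdim : finrank F C = K * Fintype.card I)
    (hMDS : ∀ c ∈ C, ∀ S : Finset J, S.card = K → (∀ j ∈ S, c j = 0) → c = 0)
    {T : Finset J} (hT : T.card = K) (v : J → I → F) : ∃ c ∈ C, Set.EqOn c v T := by
  let π : C →ₗ[F] (T → I → F) := LinearMap.funLeft F (I → F) ((↑) : T → J) ∘ₗ C.subtype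
  have hπ : Function.Injective π := (injective_iff_map_eq_zero π).2 fun c hc =>
    Subtype.ext <| hMDS c c.2 T hT fun j hj => congrFun hc ⟨j, hj⟩
  obtain ⟨c, hc⟩ := (LinearMap.injective_iff_surjective_of_finrank_eq_finrank
    (by simp [finrank_pi_fintype, hdim, hT])).1 hπ fun j => v j
  exact ⟨c, c.2, fun j hj => congrFun hc ⟨j, hj⟩⟩

theorem eq_zero_of_orthogonal_of_support_subset (hdim : finrank F C = K * Fintype.card I)
    (hMDS : ∀ c ∈ C, ∀ S : Finset J, S.card = K → (∀ j ∈ S, c j = 0) → c = 0)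
    {w : J → I → F} (hw : ∀ c ∈ C, ∑ j, w j ⬝ᵥ c j = 0)
    {T : Finset J} (hT : T.card = K) (hsupp : ∀ j ∉ T, w j = 0) : w = 0 := by
  classical
  ext j₀ i₀
  let v : J → I → F := Pi.single j₀ (Pi.single i₀ 1)
  obtain ⟨c, hcC, hc⟩ := exists_mem_eqOn_of_mds hdim hMDS hT v
  have hwc : ∀ j, w j ⬝ᵥ c j = w j ⬝ᵥ v j := fun j => by
    by_cases hj : j ∈ T
    · rw [hc hj]
    · simp [hsupp j hj]
  have h := hw c hcC
  rw [Fintype.sum_congr _ _ hwc, Fintype.sum_eq_single j₀ fun j hj => by simp [v, hj]] at h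
  simpa [v] using h

end MDS

theorem Finset.exists_card_eq_and_compl_subset_racks {α β : Type*} [DecidableEq α] [Fintype β]
    [DecidableEq β] {R S : Finset α} {a b : α} (U : Finset β) (ha : a ∉ R) (hb : b ∈ R \ S) :
    ∃ T : Finset (α × β), T.card = (R \ S).card * Fintype.card β + Uᶜ.card ∧
      ∀ e g, (e, g) ∉ T → e ∈ S ∨ (e = b ∧ g ∈ U) ∨ (e ∉ R ∧ e ≠ a) := by
  have hba : b ≠ a := fun h => ha (h ▸ (mem_sdiff.1 hb).1)
  refine ⟨insert a ((R \ S).erase b) ×ˢ univ ∪ {b} ×ˢ Uᶜ, ?_, fun e g h => ?_⟩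
  · rw [card_union_of_disjoint (disjoint_product.2 (.inl (by simp [hba]))), card_product,
      card_product, card_insert_of_notMem (by simp [ha]), card_erase_add_one hb]
    simp
  · simp only [mem_union, mem_product, mem_insert, mem_erase, mem_sdiff, mem_univ, and_true,
      mem_singleton, mem_compl, not_or, not_and, not_not] at h
    tauto

theorem rank_trade_off_general
    (F : Type*) [Field F]
    (u nb kb v db sb l h : ℕ)
    (hv : v < u)
    (hdb1 : kb ≤ db) (hsb : sb = db - kb + 1)
    (C : Submodule F ((Fin nb × Fin u) → Fin l → F))
    (hdim : Module.finrank F C = (kb * u + v) * l)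
    (hMDS : ∀ c ∈ C, ∀ S : Finset (Fin nb × Fin u), S.card = kb * u + v →
      (∀ j ∈ S, c j = 0) → c = 0)
    (P : Matrix (Fin (h * l)) ((Fin nb × Fin u) × Fin l) F)
    (hdual : ∀ ρ : Fin (h * l), ∀ c ∈ C,
      ∑ j : Fin nb × Fin u, ∑ i : Fin l, P ρ (j, i) * c j i = 0)
    (e' : Fin nb) (g' : Fin h → Fin u)
    (hrank1 : (Matrix.of fun ρ (bi : Fin h × Fin l) =>
      P ρ ((e', g' bi.1), bi.2)).rank = h * l)
    (R : Finset (Fin nb)) (hR : R.card = db) (he'R : e' ∉ R)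
    (hzero : ∀ e : Fin nb, e ∉ R → e ≠ e' → ∀ ρ g i, P ρ ((e, g), i) = 0) :
    ∀ S ⊆ R, S.card = sb - 1 → ∀ et ∈ R, et ∉ S →
      ∀ U : Finset (Fin u), U.card = u - v →
        h * l ≤ (∑ e ∈ S, (Matrix.of fun ρ (gi : Fin u × Fin l) =>
            P ρ ((e, gi.1), gi.2)).rank)
          + ∑ g ∈ U, (Matrix.of fun ρ (i : Fin l) => P ρ ((et, g), i)).rank := by
  intro S hSR hScard et hetR hetS U hUcard
  obtain ⟨T, hTcard, hT⟩ := exists_card_eq_and_compl_subset_racks U he'R (mem_sdiff.2 ⟨hetR, hetS⟩)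
  have hRS : (R \ S).card = kb := by rw [card_sdiff_of_subset hSR]; omega
  have hUc : Uᶜ.card = v := by rw [card_compl, hUcard, Fintype.card_fin]; omega
  rw [hRS, hUc, Fintype.card_fin] at hTcard
  have key := card_le_sum_rank_add_sum_rank
    (fun e : S => of fun ρ (gi : Fin u × Fin l) => P ρ ((e, gi.1), gi.2))
    (fun g : U => of fun ρ (i : Fin l) => P ρ ((et, g), i)) fun x hxS hxU => by
      have hw : (fun j i => (x ᵥ* P) (j, i)) = 0 := by
        refine eq_zero_of_orthogonal_of_support_subset (by rwa [Fintype.card_fin]) hMDS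
          (fun c hc => P.sum_dotProduct_vecMul_eq_zero (hdual · c hc) x) hTcard ?_
        rintro ⟨e, g⟩ hj
        funext i
        rcases hT e g hj with he | ⟨rfl, hg⟩ | ⟨he, he'⟩
        · exact congrFun (hxS ⟨e, he⟩) (g, i)
        · exact congrFun (hxU ⟨g, hg⟩) i
        · simp [vecMul, dotProduct, hzero e he he']
      refine vecMul_injective_of_rank_eq_card (hrank1.trans (Fintype.card_fin _).symm)
        ((funext fun bi => ?_).trans (zero_vecMul _).symm)
      exact congrFun (congrFun hw (e', g' bi.1)) bi.2
  rw [← sum_coe_sort S, ← sum_coe_sort U]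
  simpa only [Fintype.card_fin] using key

/-- **Rank trade-off inequality** (equations (12)–(13) in the proof of Theorem 1).
If the rows of `P` lie in `C^⊥`, the failed-node block has rank `hl`, and `P̄_e = 0`
off `R ∪ {e'}`, then for every `(s̄−1)`-subset `S ⊆ R`, every `ẽ ∈ R∖S`, and every
`(u−v)`-subset `U` of node indices, `h·l ≤ ∑_{e∈S} rank P̄_e + ∑_{g∈U} rank P_{ẽu+g}`. -/
theorem rank_trade_off
    (F : Type*) [Field F] [Fintype F] [DecidableEq F]
    (u nb kb v db sb l h : ℕ)
    (hu : 1 < u) (hkb : 1 ≤ kb) (hnb : kb < nb) (hv : v < u)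
    (hdb1 : kb ≤ db) (hdb2 : db ≤ nb - 1) (hsb : sb = db - kb + 1)
    (hh1 : 1 ≤ h) (hh2 : h ≤ u) (hh3 : h + v ≤ sb * u)
    (C : Submodule F ((Fin nb × Fin u) → Fin l → F))
    (hdim : Module.finrank F C = (kb * u + v) * l)
    (hMDS : ∀ c ∈ C, ∀ S : Finset (Fin nb × Fin u), S.card = kb * u + v →
      (∀ j ∈ S, c j = 0) → c = 0)
    (P : Matrix (Fin (h * l)) ((Fin nb × Fin u) × Fin l) F)
    (hdual : ∀ ρ : Fin (h * l), ∀ c ∈ C,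
      ∑ j : Fin nb × Fin u, ∑ i : Fin l, P ρ (j, i) * c j i = 0)
    (e' : Fin nb) (g' : Fin h → Fin u) (hg' : Function.Injective g')
    (hrank1 : (Matrix.of fun ρ (bi : Fin h × Fin l) =>
      P ρ ((e', g' bi.1), bi.2)).rank = h * l)
    (R : Finset (Fin nb)) (hR : R.card = db) (he'R : e' ∉ R)
    (hzero : ∀ e : Fin nb, e ∉ R → e ≠ e' → ∀ ρ g i, P ρ ((e, g), i) = 0) :
    ∀ S ⊆ R, S.card = sb - 1 → ∀ et ∈ R, et ∉ S →
      ∀ U : Finset (Fin u), U.card = u - v →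
        h * l ≤ (∑ e ∈ S, (Matrix.of fun ρ (gi : Fin u × Fin l) =>
            P ρ ((e, gi.1), gi.2)).rank)
          + ∑ g ∈ U, (Matrix.of fun ρ (i : Fin l) => P ρ ((et, g), i)).rank :=
  rank_trade_off_general F u nb kb v db sb l h hv hdb1 hsb C hdim hMDS P hdual e' g' hrank1 R hR
    he'R hzero
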